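/- Let D = S × C where S is cyclic of order 3 generated by s and C is cyclic of order 3^n (n ≥ 2), and let c₁ be an element of order 3 in C. Let A be an S-ring over D and T a basic set of A. If T contains elements a, b with |a| > |b| ≥ 3 (orders of elements), then the three elements a, a·c₁, a·c₁² all belong to T. -/

import Mathlib

open scoped BigOperators Pointwise Classical

noncomputable section

/-- The group-ring element `X̄ = Σ_{x∈X} x` in `ℤG`. -/
def ind {G : Type*} [Group G] (X : Finset G) : MonoidAlgebra ℤ G :=
  ∑ x ∈ X, MonoidAlgebra.single x 1

/-- The ℤ-span of the class sums of the members of `S`. -/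
def spanA {G : Type*} [Group G] (S : Finset (Finset G)) :
    Submodule ℤ (MonoidAlgebra ℤ G) :=
  Submodule.span ℤ (ind '' (S : Set (Finset G)))

/-- `S` is the partition of basic sets of an S-ring over `G`. -/
structure IsSRing {G : Type*} [Group G] (S : Finset (Finset G)) : Prop where
  cover : ∀ g : G, ∃ X ∈ S, g ∈ X
  disj : ∀ X ∈ S, ∀ Y ∈ S, X ≠ Y → Disjoint X Y
  nonempty : ∀ X ∈ S, X.Nonempty
  one_mem : ({1} : Finset G) ∈ S
  inv_mem : ∀ X ∈ S, X.image (·⁻¹) ∈ S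
  mul_closed : ∀ a ∈ spanA S, ∀ b ∈ spanA S, a * b ∈ spanA S

/-- `X` is an `A`-set: its class sum lies in the span of the basic class sums. -/
def IsASet {G : Type*} [Group G] (S : Finset (Finset G)) (X : Finset G) : Prop :=
  ind X ∈ spanA S

/-- The finset underlying a subgroup of a finite group. -/
def subgroupFinset {G : Type*} [Group G] [Fintype G] (H : Subgroup G) : Finset G :=
  Finset.univ.filter (· ∈ H)

/-- `H` is an `A`-subgroup. -/
def IsASubgroup {G : Type*} [Group G] [Fintype G] (S : Finset (Finset G))
    (H : Subgroup G) : Prop :=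
  IsASet S (subgroupFinset H)

/-- The radical `rad(X) = {g : gX = Xg = X}` as a subgroup. -/
def radSubgroup {G : Type*} [Group G] (X : Finset G) : Subgroup G where
  carrier := {g : G | X.image (g * ·) = X ∧ X.image (· * g) = X}
  one_mem' := by
    constructor <;> · simp only [one_mul, mul_one]; exact Finset.image_id
  mul_mem' := by
    rintro a b ⟨ha1, ha2⟩ ⟨hb1, hb2⟩
    constructor
    · have : X.image (a * b * ·) = (X.image (b * ·)).image (a * ·) := by
        rw [Finset.image_image]
        exact Finset.image_congr (fun x _ => by simp [mul_assoc])
      rw [this, hb1, ha1]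
    · have : X.image (· * (a * b)) = (X.image (· * a)).image (· * b) := by
        rw [Finset.image_image]
        exact Finset.image_congr (fun x _ => by simp [mul_assoc])
      rw [this, ha2, hb2]
  inv_mem' := by
    rintro a ⟨ha1, ha2⟩
    constructor
    · have := congrArg (Finset.image (a⁻¹ * ·)) ha1
      rw [Finset.image_image] at this
      have h2 : X.image ((a⁻¹ * ·) ∘ (a * ·)) = X := by
        rw [show ((a⁻¹ * ·) ∘ (a * ·)) = id by funext x; simp, Finset.image_id]
      rw [← this, h2]
    · have := congrArg (Finset.image (· * a⁻¹)) ha2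
      rw [Finset.image_image] at this
      have h2 : X.image ((· * a⁻¹) ∘ (· * a)) = X := by
        rw [show ((· * a⁻¹) ∘ (· * a)) = id by funext x; simp, Finset.image_id]
      rw [← this, h2]

end

instance nePow (a k : ℕ) [NeZero a] : NeZero (a ^ k) := ⟨pow_ne_zero k (NeZero.ne a)⟩

/-- The group `D = ℤ₃ × ℤ_{3^n}` (written multiplicatively). -/
abbrev Dgrp (n : ℕ) := Multiplicative (ZMod 3) × Multiplicative (ZMod (3 ^ n))

/-!
Let `|a| = 3 ^ k`. Since `3 ≤ |b| < |a|`, we have `k ≥ 2` and `|b|` divides `3 ^ (k - 1)`, so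
for every `u` the exponent `m = 1 + 3 ^ (k - 1) u` is prime to `|D|` and fixes `b`. By Schur's
multiplier theorem `T ^ (m)` is a union of basic sets; it meets the basic set `T` in `b` and is
no larger than `T`, hence equals `T`, and so `a ^ m = a d ^ u ∈ T` where `d = a ^ (3 ^ (k - 1))`.
As `k ≥ 2`, `d` is an element of order 3 of the cyclic factor `C`, so its powers are `1, c₁, c₁²`.
-/

open Subgroup

open Finset in
theorem IsCyclic.mem_zpowers_of_orderOf_dvd {G : Type*} [Group G] [Finite G] [IsCyclic G]
    {x y : G} (hx : orderOf x ∣ orderOf y) : x ∈ zpowers y := by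
  have := Fintype.ofFinite G
  have hsub : (zpowers y : Set G).toFinset ⊆ ({g | g ^ orderOf y = 1} : Finset G) :=
    fun g hg => mem_filter.mpr ⟨mem_univ g,
      orderOf_dvd_iff_pow_eq_one.mp (orderOf_dvd_of_mem_zpowers (Set.mem_toFinset.mp hg))⟩
  have hcard : #({g | g ^ orderOf y = 1} : Finset G) ≤ #(zpowers y : Set G).toFinset := by
    rw [← Nat.card_eq_card_toFinset]
    exact (Nat.card_zpowers y).symm ▸ IsCyclic.card_pow_eq_one_le (orderOf_pos y)
  rw [← SetLike.mem_coe, ← Set.mem_toFinset, eq_of_subset_of_card_le hsub hcard]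
  exact mem_filter.mpr ⟨mem_univ x, orderOf_dvd_iff_pow_eq_one.mp hx⟩

theorem Prod.mk_one_mem_zpowers {G H : Type*} [Group G] [Group H] [Finite H] [IsCyclic H]
    {d : G × H} (hd : d.1 = 1) {x : H} (hx : orderOf x ∣ orderOf d) :
    ((1 : G), x) ∈ zpowers d := by
  have hd' : d = MonoidHom.inr G H d.2 := Prod.ext hd rfl
  rw [hd', orderOf_injective _ (Prod.mk_right_injective 1) d.2] at hx
  rw [hd', ← MonoidHom.map_zpowers]
  exact ⟨x, IsCyclic.mem_zpowers_of_orderOf_dvd hx, rfl⟩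

theorem coeff_ind {G : Type*} [Group G] (X : Finset G) (g : G) :
    (ind X).coeff g = if g ∈ X then 1 else 0 := by
  simp [ind, MonoidAlgebra.coeff_sum, Finset.sum_apply', MonoidAlgebra.coeff_single,
    Finsupp.single_apply]

namespace IsSRing

section Basic

variable {G : Type*} [Group G] {S : Finset (Finset G)}

theorem eq_of_mem_of_mem (hS : IsSRing S) {X Y : Finset G} (hX : X ∈ S) (hY : Y ∈ S) {x : G}
    (hxX : x ∈ X) (hxY : x ∈ Y) : X = Y := by
  by_contra hXY
  exact Finset.disjoint_left.mp (hS.disj X hX Y hY hXY) hxX hxY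

theorem coeff_eq_of_mem_spanA (hS : IsSRing S) {z : MonoidAlgebra ℤ G} (hz : z ∈ spanA S)
    {X : Finset G} (hX : X ∈ S) {x y : G} (hx : x ∈ X) (hy : y ∈ X) :
    z.coeff x = z.coeff y := by
  induction hz using Submodule.span_induction with
  | mem w hw =>
    obtain ⟨Y, hY, rfl⟩ := hw
    have hxy : x ∈ Y ↔ y ∈ Y :=
      ⟨fun hxY => hS.eq_of_mem_of_mem hX hY hx hxY ▸ hy,
        fun hyY => hS.eq_of_mem_of_mem hX hY hy hyY ▸ hx⟩
    simp only [coeff_ind, hxy]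
  | zero => rfl
  | add u v _ _ hu hv => simp only [MonoidAlgebra.coeff_add, Finsupp.add_apply, hu, hv]
  | smul r u _ hu => simp only [MonoidAlgebra.coeff_smul, Finsupp.smul_apply, hu]

theorem pow_mem_spanA (hS : IsSRing S) {z : MonoidAlgebra ℤ G} (hz : z ∈ spanA S) {k : ℕ}
    (hk : 0 < k) : z ^ k ∈ spanA S := by
  induction k, hk using Nat.le_induction with
  | base => simpa using hz
  | succ k _ ih => rw [pow_succ]; exact hS.mul_closed _ ih _ hz

theorem subset_of_isASet (hS : IsSRing S) {X Y : Finset G} (hX : X ∈ S) (hY : IsASet S Y)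
    {x : G} (hxX : x ∈ X) (hxY : x ∈ Y) : X ⊆ Y := by
  intro y hy
  have := hS.coeff_eq_of_mem_spanA hY hX hxX hy
  simp only [coeff_ind, hxY, if_true] at this
  by_contra hyY
  simp [hyY] at this

theorem isASet_of_forall_subset (hS : IsSRing S) {Y : Finset G}
    (hY : ∀ X ∈ S, ∀ x ∈ X, x ∈ Y → X ⊆ Y) : IsASet S Y := by
  have hYunion : Y = (S.filter (· ⊆ Y)).biUnion id := by
    ext y
    simp only [Finset.mem_biUnion, Finset.mem_filter, id]
    constructor
    · intro hy
      obtain ⟨X, hX, hyX⟩ := hS.cover y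
      exact ⟨X, ⟨hX, hY X hX y hyX hy⟩, hyX⟩
    · rintro ⟨X, ⟨-, hXY⟩, hyX⟩
      exact hXY hyX
  have hdisj : (S.filter (· ⊆ Y) : Set (Finset G)).PairwiseDisjoint id :=
    fun X hX X' hX' hne =>
      hS.disj X (Finset.mem_filter.mp hX).1 X' (Finset.mem_filter.mp hX').1 hne
  rw [IsASet, hYunion, ind, Finset.sum_biUnion hdisj]
  exact Submodule.sum_mem _ fun X hX =>
    Submodule.subset_span ⟨X, (Finset.mem_filter.mp hX).1, rfl⟩


end Basic

section Commutative

variable {G : Type*} [CommGroup G] {S : Finset (Finset G)}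

/-- Schur's multiplier theorem for a prime `p`: modulo `p`, Frobenius turns `X̄ ^ p` into the
class sum of `X ^ (p)`, and the coefficients of `X̄ ^ p ∈ A` are constant on basic sets. -/
theorem isASet_image_pow_prime [DecidableEq G] (hS : IsSRing S) {p : ℕ} [Fact p.Prime]
    (hinj : Function.Injective fun x : G => x ^ p) {X : Finset G} (hX : IsASet S X) :
    IsASet S (X.image (· ^ p)) := by
  have hpow : ind X ^ p ∈ spanA S := hS.pow_mem_spanA hX (Fact.out : p.Prime).pos
  have hfrob : MonoidAlgebra.mapRingHom G (Int.castRingHom (ZMod p)) (ind X ^ p) =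
      ∑ y ∈ X.image (· ^ p), MonoidAlgebra.single y 1 := by
    have : CharP (MonoidAlgebra (ZMod p) G) p := charP_of_injective_algebraMap' (ZMod p) p
    rw [map_pow, ind, map_sum, sum_pow_char, Finset.sum_image fun x _ y _ h => hinj h]
    simp
  have hcoeff (g : G) :
      ((ind X ^ p).coeff g : ZMod p) = if g ∈ X.image (· ^ p) then 1 else 0 := by
    rw [← eq_intCast (Int.castRingHom (ZMod p)), ← MonoidAlgebra.coeff_mapRingHom, hfrob]
    simp [MonoidAlgebra.coeff_sum, Finset.sum_apply', MonoidAlgebra.coeff_single,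
      Finsupp.single_apply]
  refine hS.isASet_of_forall_subset fun Y hY x hxY hx y hyY => ?_
  have := congrArg (fun t : ℤ => (t : ZMod p)) (hS.coeff_eq_of_mem_spanA hpow hY hxY hyY)
  simp only [hcoeff, hx, if_true] at this
  by_contra hy
  simp [hy] at this

theorem isASet_image_pow [DecidableEq G] (hS : IsSRing S) {m : ℕ} (hm : (Nat.card G).Coprime m)
    {X : Finset G} (hX : IsASet S X) : IsASet S (X.image (· ^ m)) := by
  induction m using Nat.recOnMul generalizing X with
  | zero =>
    have : Subsingleton G :=
      (Nat.card_eq_one_iff_unique.mp ((Nat.coprime_zero_right _).mp hm)).1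
    rwa [show (fun x : G => x ^ 0) = id from funext fun _ => Subsingleton.elim _ _,
      Finset.image_id]
  | one => simpa using hX
  | prime p hp =>
    have : Fact p.Prime := ⟨hp⟩
    exact hS.isASet_image_pow_prime (powCoprime hm).injective hX
  | mul a b iha ihb =>
    have himage : X.image (· ^ (a * b)) = (X.image (· ^ a)).image (· ^ b) := by
      simp only [Finset.image_image, Function.comp_def, pow_mul]
    rw [himage]
    exact ihb hm.coprime_mul_left_right (iha hm.coprime_mul_right_right hX)

theorem pow_mem_of_pow_eq_self (hS : IsSRing S) {T : Finset G} (hT : T ∈ S) {a b : G}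
    (ha : a ∈ T) (hb : b ∈ T) {m : ℕ} (hm : (Nat.card G).Coprime m) (hbm : b ^ m = b) :
    a ^ m ∈ T := by
  have hTm : IsASet S (T.image (· ^ m)) :=
    hS.isASet_image_pow hm (Submodule.subset_span ⟨T, hT, rfl⟩)
  have hsub : T ⊆ T.image (· ^ m) :=
    hS.subset_of_isASet hT hTm hb (Finset.mem_image.mpr ⟨b, hb, hbm⟩)
  rw [Finset.eq_of_subset_of_card_le hsub Finset.card_image_le]
  exact Finset.mem_image_of_mem _ ha

theorem mul_mem_of_orderOf_lt [Finite G] {p : ℕ} [hp : Fact p.Prime] (hG : IsPGroup p G)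
    (hS : IsSRing S) {T : Finset G} (hT : T ∈ S) {a b : G} (ha : a ∈ T) (hb : b ∈ T)
    (hab : orderOf b < orderOf a) {x : G} (hx : x ∈ zpowers (a ^ (orderOf a / p))) :
    a * x ∈ T := by
  obtain ⟨k, hk⟩ := IsPGroup.iff_orderOf.mp hG a
  obtain ⟨j, hj⟩ := IsPGroup.iff_orderOf.mp hG b
  have hjk : j < k := (Nat.pow_lt_pow_iff_right hp.out.one_lt).mp (hk ▸ hj ▸ hab)
  obtain ⟨j, rfl⟩ : ∃ j', j = j' + 1 := by
    refine Nat.exists_eq_succ_of_ne_zero fun hj0 => ?_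
    have hb1 : b = 1 := orderOf_eq_one_iff.mp (by rw [hj, hj0, pow_zero])
    have hT1 : T = {1} := hS.eq_of_mem_of_mem hT hS.one_mem hb (by simp [hb1])
    rw [hT1, Finset.mem_singleton] at ha
    simp [ha, hb1] at hab
  obtain ⟨i, rfl⟩ : ∃ i, k = i + 1 := Nat.exists_eq_succ_of_ne_zero (by omega)
  rw [hk, pow_succ, Nat.mul_div_cancel _ hp.out.pos, ← mem_powers_iff_mem_zpowers] at hx
  obtain ⟨u, rfl⟩ := hx
  -- `m = 1 + p ^ i * u` is prime to `p`, fixes `b` and sends `a` to `a * x`.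
  obtain ⟨t, ht⟩ : p ∣ p ^ i * u := (dvd_pow_self p (by omega)).mul_right u
  obtain ⟨N, hN⟩ := IsPGroup.iff_card.mp hG
  have hm : (Nat.card G).Coprime (1 + p ^ i * u) := by
    rw [hN, ht]
    exact ((Nat.coprime_add_mul_left_right p 1 t).mpr (Nat.coprime_one_right p)).pow_left N
  have hbm : b ^ (1 + p ^ i * u) = b := by
    have hbi : b ^ p ^ i = 1 := orderOf_dvd_iff_pow_eq_one.mp (hj ▸ pow_dvd_pow p (by omega))
    rw [pow_add, pow_one, pow_mul, hbi, one_pow, mul_one]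
  simpa [pow_add, pow_mul] using hS.pow_mem_of_pow_eq_self hT ha hb hm hbm

end Commutative

end IsSRing

theorem stmt8_general (n : ℕ) (S : Finset (Finset (Dgrp n)))
    (hS : IsSRing S) (c₁ : Multiplicative (ZMod (3 ^ n))) (hc₁ : orderOf c₁ = 3)
    (T : Finset (Dgrp n)) (hT : T ∈ S) (a b : Dgrp n) (ha : a ∈ T) (hb : b ∈ T)
    (hab : orderOf b < orderOf a) (hb3 : 3 ≤ orderOf b) :
    a ∈ T ∧ a * (1, c₁) ∈ T ∧ a * (1, c₁) ^ 2 ∈ T := by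
  have hD : IsPGroup 3 (Dgrp n) := IsPGroup.of_card (n := n + 1) (by
    simp [Nat.card_eq_fintype_card, pow_succ, mul_comm])
  obtain ⟨k, hk⟩ := IsPGroup.iff_orderOf.mp hD a
  have h9 : 3 * 3 ∣ orderOf a := by
    have : 3 ^ 1 < 3 ^ k := by omega
    rw [hk, ← pow_two]
    exact pow_dvd_pow 3 ((Nat.pow_lt_pow_iff_right (by norm_num)).mp this)
  set d := a ^ (orderOf a / 3) with hd
  have hd1 : d.1 = 1 := by
    obtain ⟨t, ht⟩ := Nat.dvd_div_of_mul_dvd h9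
    have ha1 : a.1 ^ 3 = 1 := by simpa using pow_card_eq_one' (G := Multiplicative (ZMod 3))
    rw [hd, Prod.pow_fst, ht, pow_mul, ha1, one_pow]
  have hdo : orderOf d = 3 := orderOf_pow_orderOf_div (orderOf_pos a).ne' (dvd_of_mul_left_dvd h9)
  have hc : ((1 : Multiplicative (ZMod 3)), c₁) ∈ zpowers d :=
    Prod.mk_one_mem_zpowers hd1 (hc₁.trans hdo.symm).dvd
  exact ⟨ha, hS.mul_mem_of_orderOf_lt hD hT ha hb hab hc,
    hS.mul_mem_of_orderOf_lt hD hT ha hb hab (pow_mem hc 2)⟩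

/-- if a basic set `T` of an S-ring over `D = ℤ₃ × ℤ_{3^n}`
contains elements `a`, `b` with `|a| > |b| ≥ 3`, then `a`, `a·c₁`, `a·c₁²`
all belong to `T`, where `c₁` has order 3 in the cyclic factor `C`. -/
theorem stmt8 (n : ℕ) (hn : 2 ≤ n) (S : Finset (Finset (Dgrp n)))
    (hS : IsSRing S) (c₁ : Multiplicative (ZMod (3 ^ n))) (hc₁ : orderOf c₁ = 3)
    (T : Finset (Dgrp n)) (hT : T ∈ S) (a b : Dgrp n) (ha : a ∈ T) (hb : b ∈ T)
    (hab : orderOf b < orderOf a) (hb3 : 3 ≤ orderOf b) :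
    a ∈ T ∧ a * (1, c₁) ∈ T ∧ a * (1, c₁) ^ 2 ∈ T :=
  stmt8_general n S hS c₁ hc₁ T hT a b ha hb hab hb3
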